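/- For every integer n ≥ 1, the map μ defined by μ(x,y) = z = (z₁,…,z_n) with z_j = (√(R² − y_j·y_j)/R)·x_j + i y_j (1 ≤ j ≤ n) is a bijection from the set {(x,y) : x = (x₁,…,x_n) ∈ X_d^n, y_j ∈ ℝ^{d+1}, x_j·y_j = 0 and y_j·y_j < R² for all j} onto the set Zⁿ_R = (X_d^{(c)})^n ∖ Yⁿ_R, where Yⁿ_R = {z ∈ (X_d^{(c)})^n : Re z_{j₀} = 0 for at least one j₀}; moreover μ maps the set {(x,y) in its domain : y_{j+1} − y_j ∈ V₊ for 1 ≤ j ≤ n−1} onto 𝒯_n ∖ Yⁿ_R. -/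
import Mathlib


noncomputable section
open Complex

/-- Minkowski bilinear form on `ℂ^{d+1}`. -/
def minkC (d : ℕ) (z w : Fin (d+1) → ℂ) : ℂ := 2 * z 0 * w 0 - ∑ i, z i * w i

/-- Minkowski bilinear form on `ℝ^{d+1}`. -/
def minkR (d : ℕ) (x y : Fin (d+1) → ℝ) : ℝ := 2 * x 0 * y 0 - ∑ i, x i * y i

/-- The open forward light cone `V₊`. -/
def Vplus (d : ℕ) : Set (Fin (d+1) → ℝ) := {y | 0 < y 0 ∧ 0 < minkR d y y}

/-- The complexified de Sitter space. -/
def Xc (d : ℕ) (R : ℝ) : Set (Fin (d+1) → ℂ) := {z | minkC d z z = -((R : ℂ)^2)}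

/-- The variety `(X_d^{(c)})^n`. -/
def variety (d n : ℕ) (R : ℝ) : Set (Fin n → Fin (d+1) → ℂ) := {z | ∀ k, z k ∈ Xc d R}

/-- The tuboid `𝒯_n`. -/
def tuboid (d n : ℕ) (R : ℝ) : Set (Fin n → Fin (d+1) → ℂ) :=
  {z ∈ variety d n R | ∀ (j : ℕ) (h : j + 1 < n),
    (fun i => ((z ⟨j+1, h⟩ - z ⟨j, Nat.lt_of_succ_lt h⟩) i).im) ∈ Vplus d}

/-- The exceptional set `Yⁿ_R` where some `Re z_{j₀} = 0`. -/
def Yexc (d n : ℕ) (R : ℝ) : Set (Fin n → Fin (d+1) → ℂ) :=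
  {z ∈ variety d n R | ∃ j₀, ∀ i, (z j₀ i).re = 0}

/-- The map `μ(x,y)_j = (√(R² − y_j·y_j)/R)·x_j + i y_j`. -/
def muMap (d n : ℕ) (R : ℝ)
    (p : (Fin n → Fin (d+1) → ℝ) × (Fin n → Fin (d+1) → ℝ)) :
    Fin n → Fin (d+1) → ℂ :=
  fun j i => ((Real.sqrt (R^2 - minkR d (p.2 j) (p.2 j)) / R : ℝ) : ℂ) * ((p.1 j i : ℝ) : ℂ)
    + Complex.I * ((p.2 j i : ℝ) : ℂ)

/-- The domain of `μ`: pairs `(x,y)` with `x ∈ X_d^n`, `x_j·y_j = 0`, `y_j·y_j < R²`. -/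
def muDom (d n : ℕ) (R : ℝ) :
    Set ((Fin n → Fin (d+1) → ℝ) × (Fin n → Fin (d+1) → ℝ)) :=
  {p | (∀ j, minkR d (p.1 j) (p.1 j) = -(R^2)) ∧
       (∀ j, minkR d (p.1 j) (p.2 j) = 0) ∧
       (∀ j, minkR d (p.2 j) (p.2 j) < R^2)}

/-- The subset of the domain where moreover `y_{j+1} − y_j ∈ V₊`. -/
def muDomTube (d n : ℕ) (R : ℝ) :
    Set ((Fin n → Fin (d+1) → ℝ) × (Fin n → Fin (d+1) → ℝ)) :=
  {p ∈ muDom d n R | ∀ (j : ℕ) (h : j + 1 < n),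
    (fun i => (p.2 ⟨j+1, h⟩ - p.2 ⟨j, Nat.lt_of_succ_lt h⟩) i) ∈ Vplus d}

/- ===================== auxiliary lemmas ===================== -/

lemma minkR_smul (d : ℕ) (c c' : ℝ) (x y : Fin (d+1) → ℝ) :
    minkR d (fun i => c * x i) (fun i => c' * y i) = c * c' * minkR d x y := by
  have h : ∀ i ∈ Finset.univ, (c * x i) * (c' * y i) = c * c' * (x i * y i) :=
    fun i _ => by ring
  rw [minkR, minkR, Finset.sum_congr rfl h, ← Finset.mul_sum]
  ring

lemma minkR_smul_left (d : ℕ) (c : ℝ) (x y : Fin (d+1) → ℝ) :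
    minkR d (fun i => c * x i) y = c * minkR d x y := by
  have h : ∀ i ∈ Finset.univ, (c * x i) * y i = c * (x i * y i) :=
    fun i _ => by ring
  rw [minkR, minkR, Finset.sum_congr rfl h, ← Finset.mul_sum]
  ring

lemma minkC_expand (d : ℕ) (α β : ℂ) (x y : Fin (d+1) → ℝ) :
    minkC d (fun i => α * (x i : ℝ) + β * (y i : ℝ)) (fun i => α * (x i : ℝ) + β * (y i : ℝ))
      = α^2 * ((minkR d x x : ℝ) : ℂ) + 2*α*β*((minkR d x y : ℝ) : ℂ)
        + β^2 * ((minkR d y y : ℝ) : ℂ) := by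
  have h : ∀ i ∈ Finset.univ, (α * (x i:ℝ) + β * (y i:ℝ)) * (α * (x i:ℝ) + β * (y i:ℝ))
      = α^2 * (((x i * x i : ℝ)):ℂ) + 2*α*β*(((x i * y i : ℝ)):ℂ) + β^2*(((y i * y i:ℝ)):ℂ) := by
    intro i _; push_cast; ring
  simp only [minkC, minkR]
  rw [Finset.sum_congr rfl h, Finset.sum_add_distrib, Finset.sum_add_distrib,
    ← Finset.mul_sum, ← Finset.mul_sum, ← Finset.mul_sum]
  push_cast
  ring

lemma mink_neg (d : ℕ) (a b : Fin (d+1) → ℝ) (hb : 0 < minkR d b b)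
    (hab : minkR d a b = 0) (ha : a ≠ 0) : minkR d a a < 0 := by
  have hsum : ∀ (u v : Fin (d+1) → ℝ),
      minkR d u v = u 0 * v 0 - ∑ i : Fin d, u i.succ * v i.succ := by
    intro u v; rw [minkR, Fin.sum_univ_succ]; ring
  rw [hsum] at hb hab ⊢
  set A := ∑ i : Fin d, a i.succ * a i.succ with hA
  set B := ∑ i : Fin d, b i.succ * b i.succ with hB
  set S := ∑ i : Fin d, a i.succ * b i.succ with hS
  have hAnn : 0 ≤ A := Finset.sum_nonneg fun i _ => mul_self_nonneg _
  have hBnn : 0 ≤ B := Finset.sum_nonneg fun i _ => mul_self_nonneg _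
  have hCS : S^2 ≤ A * B := by
    have := Finset.sum_mul_sq_le_sq_mul_sq Finset.univ
      (fun i : Fin d => a i.succ) (fun i : Fin d => b i.succ)
    simpa [hA, hB, hS, sq] using this
  have hb0sq : 0 < b 0 * b 0 := by nlinarith
  rcases eq_or_lt_of_le hAnn with hA0 | hApos
  · have hz : ∀ i : Fin d, a i.succ = 0 := by
      intro i
      have := (Finset.sum_eq_zero_iff_of_nonneg
        (fun i _ => mul_self_nonneg (a i.succ))).mp hA0.symm i (Finset.mem_univ i)
      exact mul_self_eq_zero.mp this
    have hS0 : S = 0 := Finset.sum_eq_zero fun i _ => by rw [hz i]; ring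
    have ha0 : a 0 = 0 := by
      rw [hS0] at hab
      rcases mul_eq_zero.mp (by linarith : a 0 * b 0 = 0) with h | h
      · exact h
      · exact absurd h (by nlinarith)
    exact absurd (funext fun i => Fin.cases ha0 hz i) ha
  · have hS' : S = a 0 * b 0 := by linarith
    by_contra hcon
    push_neg at hcon
    have h1 : (a 0 * b 0)^2 ≤ A * B := hS' ▸ hCS
    have h2 : A * B < A * (b 0 * b 0) := by nlinarith [mul_lt_mul_of_pos_left hb hApos]
    nlinarith [h1, h2, mul_le_mul_of_nonneg_right hcon hb0sq.le]

/-- The single-point version of `μ`. -/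
def muMap' (d : ℕ) (R : ℝ) (x y : Fin (d+1) → ℝ) : Fin (d+1) → ℂ :=
  fun i => ((Real.sqrt (R^2 - minkR d y y) / R : ℝ) : ℂ) * ((x i : ℝ) : ℂ)
    + Complex.I * ((y i : ℝ) : ℂ)

lemma muMap_eq (d n : ℕ) (R : ℝ) (p : (Fin n → Fin (d+1) → ℝ) × (Fin n → Fin (d+1) → ℝ))
    (j : Fin n) : muMap d n R p j = muMap' d R (p.1 j) (p.2 j) := rfl

lemma mu'_re (d : ℕ) (R : ℝ) (x y : Fin (d+1) → ℝ) (i : Fin (d+1)) :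
    (muMap' d R x y i).re = (Real.sqrt (R^2 - minkR d y y) / R) * x i := by
  simp [muMap']

lemma mu'_im (d : ℕ) (R : ℝ) (x y : Fin (d+1) → ℝ) (i : Fin (d+1)) :
    (muMap' d R x y i).im = y i := by
  simp [muMap']

/-- decompose a point of `Xc`: the two real equations -/
lemma decomp (d : ℕ) (R : ℝ) (z : Fin (d+1) → ℂ) (hz : minkC d z z = -((R:ℂ)^2)) :
    minkR d (fun i => (z i).re) (fun i => (z i).re)
      - minkR d (fun i => (z i).im) (fun i => (z i).im) = -(R^2) ∧
    minkR d (fun i => (z i).re) (fun i => (z i).im) = 0 := by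
  have hzz : z = fun i => (1:ℂ) * (((z i).re : ℝ) : ℂ) + Complex.I * (((z i).im : ℝ) : ℂ) := by
    funext i
    rw [one_mul, mul_comm Complex.I, Complex.re_add_im]
  rw [hzz, show -((R:ℂ)^2) = ((-(R^2) : ℝ) : ℂ) by push_cast; ring] at hz
  rw [minkC_expand d 1 Complex.I (fun i => (z i).re) (fun i => (z i).im)] at hz
  rw [Complex.ext_iff] at hz
  simp [Complex.I_sq, ← Complex.ofReal_pow] at hz
  constructor
  · linarith [hz.1]
  · linarith [hz.2]

lemma mu'_mem (d : ℕ) (R : ℝ) (hR : 0 < R) (x y : Fin (d+1) → ℝ)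
    (hx : minkR d x x = -(R^2)) (hxy : minkR d x y = 0) (hy : minkR d y y < R^2) :
    minkC d (muMap' d R x y) (muMap' d R x y) = -((R:ℂ)^2) := by
  have hs : 0 < R^2 - minkR d y y := by linarith
  have := minkC_expand d (((Real.sqrt (R^2 - minkR d y y) / R : ℝ) : ℂ)) Complex.I x y
  rw [show minkC d (muMap' d R x y) (muMap' d R x y)
      = minkC d (fun i => ((Real.sqrt (R^2 - minkR d y y) / R : ℝ) : ℂ) * ((x i : ℝ):ℂ)
          + Complex.I * ((y i:ℝ):ℂ))
        (fun i => ((Real.sqrt (R^2 - minkR d y y) / R : ℝ) : ℂ) * ((x i : ℝ):ℂ)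
          + Complex.I * ((y i:ℝ):ℂ)) from rfl, this, hx, hxy, Complex.I_sq,
    ← Complex.ofReal_pow, div_pow, Real.sq_sqrt hs.le]
  have hRc : ((R:ℂ)) ≠ 0 := Complex.ofReal_ne_zero.mpr (ne_of_gt hR)
  push_cast
  field_simp
  ring

lemma mu'_surj (d : ℕ) (R : ℝ) (hR : 0 < R) (z : Fin (d+1) → ℂ)
    (hz : minkC d z z = -((R:ℂ)^2)) (hre : ∃ i, (z i).re ≠ 0) :
    ∃ x y, minkR d x x = -(R^2) ∧ minkR d x y = 0 ∧ minkR d y y < R^2 ∧ muMap' d R x y = z := by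
  obtain ⟨h1, h2⟩ := decomp d R z hz
  set a : Fin (d+1) → ℝ := fun i => (z i).re with haDef
  set b : Fin (d+1) → ℝ := fun i => (z i).im with hbDef
  have haNe : a ≠ 0 := by
    intro h
    obtain ⟨i, hi⟩ := hre
    exact hi (congrFun h i)
  have hyy : minkR d b b < R^2 := by
    by_contra hcon
    push_neg at hcon
    have hbpos : 0 < minkR d b b := by nlinarith
    have := mink_neg d a b hbpos h2 haNe
    linarith
  set s := R^2 - minkR d b b with hsDef
  have hs : 0 < s := by rw [hsDef]; linarith
  have hsqrt : Real.sqrt s ≠ 0 := ne_of_gt (Real.sqrt_pos.mpr hs)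
  have hmm : Real.sqrt s * Real.sqrt s = s := Real.mul_self_sqrt hs.le
  refine ⟨fun i => (R / Real.sqrt s) * a i, b, ?_, ?_, hyy, ?_⟩
  · rw [minkR_smul, show minkR d a a = -s from by rw [hsDef]; linarith,
      div_mul_div_comm, hmm]
    field_simp
  · rw [minkR_smul_left, h2, mul_zero]
  · funext i
    apply Complex.ext
    · rw [mu'_re, ← hsDef]
      have : a i = (z i).re := rfl
      rw [← this]
      field_simp
    · rw [mu'_im]

/- ===================== the theorem ===================== -/

/-- `μ` is a bijection from its domain onto `Zⁿ_R = (X_d^{(c)})^n ∖ Yⁿ_R`,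
and it maps the subset with the tube condition on `y` onto `𝒯_n ∖ Yⁿ_R`. -/
theorem stmt2 (d : ℕ) (hd : 1 ≤ d) (R : ℝ) (hR : 0 < R) (n : ℕ) (hn : 1 ≤ n) :
    Set.BijOn (muMap d n R) (muDom d n R) (variety d n R \ Yexc d n R) ∧
    muMap d n R '' muDomTube d n R = tuboid d n R \ Yexc d n R := by
  have hR2 : (0:ℝ) < R^2 := by positivity
  -- MapsTo
  have hmaps : ∀ p ∈ muDom d n R, muMap d n R p ∈ variety d n R \ Yexc d n R := by
    rintro p ⟨hx, hxy, hy⟩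
    have hvar : muMap d n R p ∈ variety d n R := by
      intro k
      rw [muMap_eq]
      exact mu'_mem d R hR (p.1 k) (p.2 k) (hx k) (hxy k) (hy k)
    refine ⟨hvar, ?_⟩
    rintro ⟨-, j₀, hre⟩
    have hs : 0 < R^2 - minkR d (p.2 j₀) (p.2 j₀) := by linarith [hy j₀]
    have hc : 0 < Real.sqrt (R^2 - minkR d (p.2 j₀) (p.2 j₀)) / R :=
      div_pos (Real.sqrt_pos.mpr hs) hR
    have hxz : ∀ i, p.1 j₀ i = 0 := by
      intro i
      have := hre i
      rw [muMap_eq, mu'_re] at this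
      rcases mul_eq_zero.mp this with h | h
      · exact absurd h (ne_of_gt hc)
      · exact h
    have : minkR d (p.1 j₀) (p.1 j₀) = 0 := by
      simp [minkR, hxz]
    rw [hx j₀] at this
    nlinarith
  -- Injectivity
  have hinj : Set.InjOn (muMap d n R) (muDom d n R) := by
    rintro p ⟨hpx, hpxy, hpy⟩ q ⟨hqx, hqxy, hqy⟩ h
    have him : p.2 = q.2 := by
      funext j i
      have := congrArg Complex.im (congrFun (congrFun h j) i)
      rwa [show muMap d n R p j i = muMap' d R (p.1 j) (p.2 j) i from rfl,
        show muMap d n R q j i = muMap' d R (q.1 j) (q.2 j) i from rfl,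
        mu'_im, mu'_im] at this
    have hre : p.1 = q.1 := by
      funext j i
      have := congrArg Complex.re (congrFun (congrFun h j) i)
      rw [show muMap d n R p j i = muMap' d R (p.1 j) (p.2 j) i from rfl,
        show muMap d n R q j i = muMap' d R (q.1 j) (q.2 j) i from rfl,
        mu'_re, mu'_re, him] at this
      have hs : 0 < R^2 - minkR d (q.2 j) (q.2 j) := by linarith [hqy j]
      have hc : 0 < Real.sqrt (R^2 - minkR d (q.2 j) (q.2 j)) / R :=
        div_pos (Real.sqrt_pos.mpr hs) hR
      exact mul_left_cancel₀ (ne_of_gt hc) this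
    exact Prod.ext_iff.mpr ⟨hre, him⟩
  -- Surjectivity
  have hsurj : Set.SurjOn (muMap d n R) (muDom d n R) (variety d n R \ Yexc d n R) := by
    rintro z ⟨hz1, hz2⟩
    have hz2' : ∀ j, ∃ i, (z j i).re ≠ 0 := by
      by_contra hc
      push_neg at hc
      obtain ⟨j₀, hj₀⟩ := hc
      exact hz2 ⟨hz1, j₀, fun i => by simpa using hj₀ i⟩
    choose x y h1 h2 h3 h4 using fun j => mu'_surj d R hR (z j) (hz1 j) (hz2' j)
    exact ⟨(x, y), ⟨h1, h2, h3⟩, funext fun j => h4 j⟩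
  refine ⟨⟨fun p hp => hmaps p hp, hinj, hsurj⟩, ?_⟩
  -- second part : image of tube part
  ext z
  constructor
  · rintro ⟨p, ⟨hp, htube⟩, rfl⟩
    obtain ⟨hvar, hnot⟩ := hmaps p hp
    refine ⟨⟨hvar, ?_⟩, hnot⟩
    intro j h
    have heq : (fun i => ((muMap d n R p ⟨j+1, h⟩ - muMap d n R p ⟨j, Nat.lt_of_succ_lt h⟩) i).im)
        = (fun i => (p.2 ⟨j+1, h⟩ - p.2 ⟨j, Nat.lt_of_succ_lt h⟩) i) := by
      funext i
      simp only [Pi.sub_apply, Complex.sub_im]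
      rw [show (muMap d n R p ⟨j+1, h⟩ i).im = (muMap' d R (p.1 ⟨j+1, h⟩) (p.2 ⟨j+1, h⟩) i).im
          from rfl,
        show (muMap d n R p ⟨j, Nat.lt_of_succ_lt h⟩ i).im
          = (muMap' d R (p.1 ⟨j, Nat.lt_of_succ_lt h⟩) (p.2 ⟨j, Nat.lt_of_succ_lt h⟩) i).im
          from rfl, mu'_im, mu'_im]
    rw [heq]
    exact htube j h
  · rintro ⟨⟨hvar, htube⟩, hnot⟩
    obtain ⟨p, hp, hpz⟩ := hsurj ⟨hvar, hnot⟩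
    refine ⟨p, ⟨hp, ?_⟩, hpz⟩
    intro j h
    have heq : (fun i => (p.2 ⟨j+1, h⟩ - p.2 ⟨j, Nat.lt_of_succ_lt h⟩) i)
        = (fun i => ((z ⟨j+1, h⟩ - z ⟨j, Nat.lt_of_succ_lt h⟩) i).im) := by
      funext i
      rw [← hpz]
      simp only [Pi.sub_apply, Complex.sub_im]
      rw [show (muMap d n R p ⟨j+1, h⟩ i).im = (muMap' d R (p.1 ⟨j+1, h⟩) (p.2 ⟨j+1, h⟩) i).im
          from rfl,
        show (muMap d n R p ⟨j, Nat.lt_of_succ_lt h⟩ i).im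
          = (muMap' d R (p.1 ⟨j, Nat.lt_of_succ_lt h⟩) (p.2 ⟨j, Nat.lt_of_succ_lt h⟩) i).im
          from rfl, mu'_im, mu'_im]
    rw [heq]
    exact htube j h
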